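/- arXiv:1409.6551 — 4 statements merged into one kernel-verified Lean document; each statement's English description precedes it below -/
import Mathlib

section
/- Let G=(V,E) be a directed graph with edge lengths, (u,v) a node pair, and L a bound. Suppose C is a u-v-stretching cut, and let T be a shortest-path out-tree rooted at u in the graph H_C := (V_{uv}, E_{uv} ∖ C), where V_{uv} and E_{uv} are the nodes and edges lying on some u-v path of length at most L. Let ℓ̄_T(w) be the distance from u to w in T (∞ if unreachable). Then C = { wx ∈ E_{uv} : ℓ̄_T(w) + ℓ(wx) < ℓ̄_T(x) }; in particular, C is uniquely determined by T. -/
/-!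
If `C` is a stretching cut and `e ∈ C`, minimality yields a short `u`-`v` path avoiding
`C \ {e}`; it must use `e`, so `e ∈ E_{uv}`, and all its edges lie in `E_{uv}`. Were
`d(e.2) ≤ d(e.1) + ℓ(e)` for the distance `d` in `H_C`, then `d` would still be a feasible
potential after adding `e` to `H_C`, so `d(v)` would be at most the length of that path,
i.e. at most `L`, producing a short path avoiding `C`. Conversely, edges of `H_C` satisfy
the triangle inequality for `d`, so they never satisfy the strict inequality.
-/

open scoped Classical

/-- `hasPath E u v p`: the vertex list `u :: p` is a walk from `u` to `v`
using only edges from `E`. -/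
def hasPath {V : Type*} (E : Set (V × V)) (u v : V) (p : List V) : Prop :=
  List.Chain (fun a b => (a, b) ∈ E) u p ∧
    (u :: p).getLast (List.cons_ne_nil _ _) = v

/-- The length (w.r.t. edge lengths `ℓ`) of the walk `u :: p`. -/
def pathLen {V : Type*} (ℓ : V × V → ℕ) (u : V) (p : List V) : ℕ :=
  (((u :: p).zip p).map ℓ).sum

/-- `C` is a `u`-`v`-stretching cut. -/
def IsStretchingCut {V : Type*} (E : Set (V × V)) (ℓ : V × V → ℕ) (L : ℕ)
    (u v : V) (C : Set (V × V)) : Prop :=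
  C ⊆ E ∧
    (¬ ∃ p : List V, hasPath (E \ C) u v p ∧ pathLen ℓ u p ≤ L) ∧
    (∀ C' ⊂ C, ∃ p : List V, hasPath (E \ C') u v p ∧ pathLen ℓ u p ≤ L)

/-- `Euv E ℓ L u v`: the set of edges lying on some `u`-`v` path of length at most `L`. -/
def Euv {V : Type*} (E : Set (V × V)) (ℓ : V × V → ℕ) (L : ℕ) (u v : V) :
    Set (V × V) :=
  {e | ∃ p : List V, hasPath E u v p ∧ pathLen ℓ u p ≤ L ∧ e ∈ (u :: p).zip p}

/-- Shortest-path distance from `u` to `w` using edges of `E` (`⊤` if unreachable);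
this equals the distance `ℓ̄_T(w)` in a shortest-path out-tree `T` rooted at `u`. -/
noncomputable def sdist {V : Type*} (E : Set (V × V)) (ℓ : V × V → ℕ)
    (u w : V) : ℕ∞ :=
  ⨅ (p : List V) (_ : hasPath E u w p), (pathLen ℓ u p : ℕ∞)

namespace StretchingCut

variable {V : Type*} {S T : Set (V × V)} {ℓ : V × V → ℕ} {u v w a : V} {p q : List V}

theorem hasPath_iff_isChain : hasPath S u v p ↔
    (u :: p).IsChain (fun a b => (a, b) ∈ S) ∧ (u :: p).getLast (List.cons_ne_nil _ _) = v :=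
  Iff.rfl

theorem hasPath_nil : hasPath S u v [] ↔ u = v := by
  simp [hasPath_iff_isChain]

theorem hasPath_cons : hasPath S u v (a :: p) ↔ (u, a) ∈ S ∧ hasPath S a v p := by
  simp [hasPath_iff_isChain, List.getLast_cons, and_assoc]

theorem pathLen_cons : pathLen ℓ u (a :: p) = ℓ (u, a) + pathLen ℓ a p := by
  simp [pathLen]

theorem mem_of_mem_edges {f : V × V} (hp : hasPath S u v p) (hf : f ∈ (u :: p).zip p) :
    f ∈ S := by
  induction p generalizing u with
  | nil => simp at hf
  | cons x r ih =>
    rw [hasPath_cons] at hp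
    rcases List.mem_cons.mp hf with rfl | hf
    · exact hp.1
    · exact ih hp.2 hf

theorem hasPath_of_forall_mem_edges (hp : hasPath S u v p)
    (hT : ∀ f ∈ (u :: p).zip p, f ∈ T) : hasPath T u v p := by
  induction p generalizing u with
  | nil => exact hasPath_nil.mpr (hasPath_nil.mp hp)
  | cons x r ih =>
    rw [hasPath_cons] at hp ⊢
    exact ⟨hT _ List.mem_cons_self, ih hp.2 fun f hf => hT f (List.mem_cons_of_mem _ hf)⟩

theorem hasPath_mono (hST : S ⊆ T) (hp : hasPath S u v p) : hasPath T u v p :=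
  hasPath_of_forall_mem_edges hp fun _ hf => hST (mem_of_mem_edges hp hf)

theorem hasPath_append (hp : hasPath S u w p) (hq : hasPath S w v q) :
    hasPath S u v (p ++ q) := by
  induction p generalizing u with
  | nil => rwa [hasPath_nil.mp hp]
  | cons x r ih =>
    rw [hasPath_cons] at hp
    exact hasPath_cons.mpr ⟨hp.1, ih hp.2⟩

theorem pathLen_append (hp : hasPath S u w p) :
    pathLen ℓ u (p ++ q) = pathLen ℓ u p + pathLen ℓ w q := by
  induction p generalizing u with
  | nil => simp [hasPath_nil.mp hp, pathLen]
  | cons x r ih =>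
    rw [hasPath_cons] at hp
    simp only [List.cons_append, pathLen_cons, ih hp.2, add_assoc]

theorem sdist_le (hp : hasPath S u w p) : sdist S ℓ u w ≤ pathLen ℓ u p :=
  iInf₂_le p hp

theorem sdist_self : sdist S ℓ u u = 0 :=
  nonpos_iff_eq_zero.mp (sdist_le (hasPath_nil.mpr rfl))

theorem exists_path_of_sdist_le {n : ℕ} (h : sdist S ℓ u w ≤ n) :
    ∃ p, hasPath S u w p ∧ pathLen ℓ u p ≤ n := by
  have hlt : sdist S ℓ u w < (n + 1 : ℕ) := h.trans_lt (by exact_mod_cast n.lt_succ_self)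
  obtain ⟨p, hp⟩ := iInf_lt_iff.mp hlt
  obtain ⟨hpath, hlen⟩ := iInf_lt_iff.mp hp
  exact ⟨p, hpath, Nat.lt_succ_iff.mp (by exact_mod_cast hlen)⟩

def IsPotential (S : Set (V × V)) (ℓ : V × V → ℕ) (f : V → ℕ∞) : Prop :=
  ∀ e ∈ S, f e.2 ≤ f e.1 + ℓ e

theorem IsPotential.insert {f : V → ℕ∞} {e : V × V} (hf : IsPotential S ℓ f)
    (he : f e.2 ≤ f e.1 + ℓ e) : IsPotential (insert e S) ℓ f := by
  rintro e' (rfl | he')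
  · exact he
  · exact hf e' he'

theorem IsPotential.le_add_pathLen {f : V → ℕ∞} (hf : IsPotential S ℓ f)
    (hp : hasPath S u v p) : f v ≤ f u + pathLen ℓ u p := by
  induction p generalizing u with
  | nil => simp [hasPath_nil.mp hp]
  | cons x r ih =>
    rw [hasPath_cons] at hp
    calc f v ≤ f x + pathLen ℓ x r := ih hp.2
      _ ≤ f u + ℓ (u, x) + pathLen ℓ x r := by gcongr; exact hf _ hp.1
      _ = f u + pathLen ℓ u (x :: r) := by rw [pathLen_cons]; push_cast; ring

theorem isPotential_sdist (S : Set (V × V)) (ℓ : V × V → ℕ) (u : V) :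
    IsPotential S ℓ (sdist S ℓ u) := by
  rintro ⟨a, b⟩ hab
  simp only [sdist, ENat.iInf_add]
  refine le_iInf₂ fun p hp => ?_
  calc ⨅ (q : List V) (_ : hasPath S u b q), (pathLen ℓ u q : ℕ∞)
      ≤ pathLen ℓ u (p ++ [b]) :=
        iInf₂_le _ (hasPath_append hp (hasPath_cons.mpr ⟨hab, hasPath_nil.mpr rfl⟩))
    _ = pathLen ℓ u p + ℓ (a, b) := by
        rw [pathLen_append hp, pathLen_cons]; simp [pathLen]

theorem Euv_subset {E : Set (V × V)} {L : ℕ} : Euv E ℓ L u v ⊆ E := by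
  rintro f ⟨p, hp, -, hf⟩
  exact mem_of_mem_edges hp hf

end StretchingCut

open StretchingCut in
theorem stretching_cut_determined_by_tree_general {V : Type*}
    (E : Set (V × V)) (ℓ : V × V → ℕ) (L : ℕ) (u v : V)
    (C : Set (V × V)) (hC : IsStretchingCut E ℓ L u v C) :
    C = {e : V × V | e ∈ Euv E ℓ L u v ∧
      sdist (Euv E ℓ L u v \ C) ℓ u e.1 + (ℓ e : ℕ∞) <
        sdist (Euv E ℓ L u v \ C) ℓ u e.2} := by
  obtain ⟨-, hcut, hmin⟩ := hC
  set D := Euv E ℓ L u v \ C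
  ext e
  constructor
  · intro heC
    obtain ⟨p, hp, hpL⟩ := hmin (C \ {e}) (Set.sdiff_singleton_ssubset.mpr heC)
    have hpE : hasPath E u v p := hasPath_mono Set.sdiff_subset hp
    have he : e ∈ (u :: p).zip p := by
      by_contra he
      refine hcut ⟨p, hasPath_of_forall_mem_edges hp fun f hf => ?_, hpL⟩
      obtain ⟨hfE, hfC⟩ := mem_of_mem_edges hp hf
      exact ⟨hfE, fun h => hfC ⟨h, by rintro rfl; exact he hf⟩⟩
    have hpD : hasPath (insert e D) u v p := by
      refine hasPath_of_forall_mem_edges hp fun f hf => ?_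
      obtain rfl | hfe := eq_or_ne f e
      · exact Set.mem_insert _ _
      · exact Or.inr ⟨⟨p, hpE, hpL, hf⟩, fun h => (mem_of_mem_edges hp hf).2 ⟨h, hfe⟩⟩
    refine ⟨⟨p, hpE, hpL, he⟩, lt_of_not_ge fun hle => hcut ?_⟩
    have hdv := ((isPotential_sdist D ℓ u).insert hle).le_add_pathLen hpD
    rw [sdist_self, zero_add] at hdv
    obtain ⟨q, hq, hqL⟩ := exists_path_of_sdist_le (hdv.trans (by exact_mod_cast hpL))
    exact ⟨q, hasPath_mono (Set.sdiff_subset_sdiff_left Euv_subset) hq, hqL⟩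
  · rintro ⟨heEuv, hlt⟩
    by_contra heC
    exact (isPotential_sdist D ℓ u e ⟨heEuv, heC⟩).not_gt hlt

/-- A `u`-`v`-stretching cut `C` is exactly the set of edges `wx ∈ E_{uv}` with
`ℓ̄_T(w) + ℓ(wx) < ℓ̄_T(x)`, where `ℓ̄_T` is the shortest-path distance from `u` in
`H_C = (V_{uv}, E_{uv} \ C)`; in particular, `C` is uniquely determined by `T`. -/
theorem stretching_cut_determined_by_tree {V : Type*} [Fintype V]
    (E : Set (V × V)) (ℓ : V × V → ℕ) (L : ℕ) (u v : V)
    (C : Set (V × V)) (hC : IsStretchingCut E ℓ L u v C) :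
    C = {e : V × V | e ∈ Euv E ℓ L u v ∧
      sdist (Euv E ℓ L u v \ C) ℓ u e.1 + (ℓ e : ℕ∞) <
        sdist (Euv E ℓ L u v \ C) ℓ u e.2} :=
  stretching_cut_determined_by_tree_general E ℓ L u v C hC
end

section
/- Let (u,v) be a thin pair, i.e., the set V_{uv} of nodes lying on some u-v path of length at most L has size at most √n. Then the number of distinct u-v-stretching cuts is at most (√n)^(√n). -/
/-- `Vuv E ℓ L u v`: the set of nodes lying on some `u`-`v` path of length at most `L`. -/
def Vuv {V : Type*} (E : Set (V × V)) (ℓ : V × V → ℕ) (L : ℕ) (u v : V) :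
    Set V :=
  {w | ∃ p : List V, hasPath E u v p ∧ pathLen ℓ u p ≤ L ∧ w ∈ u :: p}

/-!
For a stretching cut `C`, let `H_C` be the part of `E \ C` lying inside `V_uv × V_uv`, and let
`d` be the distance from `u` in `H_C`. An edge `e ∈ E` between nodes of `V_uv` lies in `C` exactly
when `d e.1 + ℓ e < d e.2`: minimality of `C` yields a short `u`-`v` walk through each `e ∈ C`,
and a tight edge outside `C` would shortcut it into a short walk avoiding `C`. The distances are
in turn recovered from a shortest-path tree of `H_C`, i.e. from a parent function
`V_uv → V_uv`, so there are at most `|V_uv| ^ |V_uv|` stretching cuts.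
-/

open Set

section Walks

variable {V : Type*} {A B : Set (V × V)} {ℓ : V × V → ℕ} {u w z : V} {p q : List V}

@[simp]
lemma hasPath_nil_iff : hasPath A u z [] ↔ u = z :=
  ⟨fun h => h.2, fun h => ⟨List.isChain_singleton u, h⟩⟩

@[simp]
lemma hasPath_cons_iff {b : V} : hasPath A u z (b :: p) ↔ (u, b) ∈ A ∧ hasPath A b z p := by
  rw [hasPath, hasPath, List.getLast_cons (List.cons_ne_nil b p), ← and_assoc]
  exact and_congr_left' List.isChain_cons_cons

@[simp]
lemma pathLen_nil : pathLen ℓ u [] = 0 := rfl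

@[simp]
lemma pathLen_cons {b : V} : pathLen ℓ u (b :: p) = ℓ (u, b) + pathLen ℓ b p := by
  simp [pathLen, List.zip_cons_cons]

lemma hasPath.mono (h : A ⊆ B) (hp : hasPath A u z p) : hasPath B u z p := by
  induction p generalizing u with
  | nil => simpa using hp
  | cons b p ih =>
    rw [hasPath_cons_iff] at hp ⊢
    exact ⟨h hp.1, ih hp.2⟩

lemma hasPath.append (hp : hasPath A u w p) (hq : hasPath A w z q) :
    hasPath A u z (p ++ q) := by
  induction p generalizing u with
  | nil => rwa [hasPath_nil_iff.mp hp]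
  | cons b p ih =>
    rw [hasPath_cons_iff] at hp
    exact hasPath_cons_iff.mpr ⟨hp.1, ih hp.2⟩

lemma pathLen_append (hp : hasPath A u w p) :
    pathLen ℓ u (p ++ q) = pathLen ℓ u p + pathLen ℓ w q := by
  induction p generalizing u with
  | nil => simp [hasPath_nil_iff.mp hp]
  | cons b p ih =>
    rw [hasPath_cons_iff] at hp
    simp [ih hp.2, Nat.add_assoc]

lemma hasPath.inter_prod {S : Set V} (hp : hasPath A u z p) (hS : ∀ x ∈ u :: p, x ∈ S) :
    hasPath (A ∩ S ×ˢ S) u z p := by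
  induction p generalizing u with
  | nil => simpa using hp
  | cons b p ih =>
    rw [hasPath_cons_iff] at hp ⊢
    exact ⟨⟨hp.1, hS u (by simp), hS b (by simp)⟩,
      ih hp.2 fun x hx => hS x (List.mem_cons_of_mem _ hx)⟩

lemma hasPath.exists_eq_concat (hp : hasPath A u w p) (hne : p ≠ []) :
    ∃ a q, p = q ++ [w] ∧ hasPath A u a q ∧ (a, w) ∈ A := by
  induction p generalizing u with
  | nil => exact absurd rfl hne
  | cons b p ih =>
    rw [hasPath_cons_iff] at hp
    rcases eq_or_ne p [] with rfl | hp0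
    · obtain rfl := hasPath_nil_iff.mp hp.2
      exact ⟨u, [], rfl, hasPath_nil_iff.mpr rfl, hp.1⟩
    · obtain ⟨a, q, rfl, hq, ha⟩ := ih hp.2 hp0
      exact ⟨a, b :: q, rfl, hasPath_cons_iff.mpr ⟨hp.1, hq⟩, ha⟩

/-- Split at the first use of `e`, then cut the remainder back to its part after the last
use of `e`. -/
lemma hasPath.exists_split_of_not_hasPath_diff {e : V × V} (hp : hasPath A u z p)
    (he : ¬ hasPath (A \ {e}) u z p) :
    e ∈ A ∧ ∃ q r, hasPath (A \ {e}) u e.1 q ∧ hasPath (A \ {e}) e.2 z r ∧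
      pathLen ℓ u q + ℓ e + pathLen ℓ e.2 r ≤ pathLen ℓ u p := by
  induction p generalizing u with
  | nil => exact absurd (by simpa using hp) he
  | cons b p ih =>
    rw [hasPath_cons_iff] at hp he
    by_cases hub : (u, b) = e
    · subst hub
      refine ⟨hp.1, [], ?_⟩
      by_cases hr : hasPath (A \ {(u, b)}) b z p
      · exact ⟨p, hasPath_nil_iff.mpr rfl, hr, by simp⟩
      · obtain ⟨-, q, r, -, hr, hlen⟩ := ih hp.2 hr
        exact ⟨r, hasPath_nil_iff.mpr rfl, hr, by simp at hlen ⊢; omega⟩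
    · obtain ⟨heA, q, r, hq, hr, hlen⟩ := ih hp.2 fun h => he ⟨⟨hp.1, hub⟩, h⟩
      refine ⟨heA, b :: q, r, hasPath_cons_iff.mpr ⟨⟨hp.1, hub⟩, hq⟩, hr, ?_⟩
      simp only [pathLen_cons]
      omega

end Walks

section Distances

variable {V : Type*} {A B : Set (V × V)} {ℓ : V × V → ℕ} {u w a : V} {p : List V}

/-- Shortest-walk distance from `u` to `w`; `⊤` if `w` is unreachable. -/
noncomputable def walkDist (A : Set (V × V)) (ℓ : V × V → ℕ) (u w : V) : ℕ∞ :=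
  sInf ((fun p => (pathLen ℓ u p : ℕ∞)) '' {p | hasPath A u w p})

lemma walkDist_le (hp : hasPath A u w p) : walkDist A ℓ u w ≤ pathLen ℓ u p :=
  sInf_le (mem_image_of_mem _ hp)

lemma walkDist_self : walkDist A ℓ u u = 0 :=
  nonpos_iff_eq_zero.mp (by simpa using walkDist_le (ℓ := ℓ) (hasPath_nil_iff (A := A).mpr rfl))

lemma exists_pathLen_eq_walkDist (h : walkDist A ℓ u w ≠ ⊤) :
    ∃ p, hasPath A u w p ∧ (pathLen ℓ u p : ℕ∞) = walkDist A ℓ u w := by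
  have hne : ((fun p => (pathLen ℓ u p : ℕ∞)) '' {p | hasPath A u w p}).Nonempty :=
    nonempty_iff_ne_empty.mpr fun h' => h (by rw [walkDist, h', sInf_empty])
  obtain ⟨p, hp, hlen⟩ := csInf_mem hne
  exact ⟨p, hp, hlen⟩

lemma walkDist_le_add (he : (a, w) ∈ A) : walkDist A ℓ u w ≤ walkDist A ℓ u a + ℓ (a, w) := by
  by_cases ha : walkDist A ℓ u a = ⊤
  · simp [ha]
  obtain ⟨p, hp, hlen⟩ := exists_pathLen_eq_walkDist ha
  have hw : hasPath A a w [w] := hasPath_cons_iff.mpr ⟨he, hasPath_nil_iff.mpr rfl⟩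
  calc walkDist A ℓ u w ≤ pathLen ℓ u (p ++ [w]) := walkDist_le (hp.append hw)
    _ = walkDist A ℓ u a + ℓ (a, w) := by simp [pathLen_append hp, ← hlen]

/-- The fewest edges on a shortest walk from `u` to `w`. Stepping back along the last edge of such
a walk decreases it, which makes shortest-path trees well founded despite zero-length edges. -/
noncomputable def walkHops (A : Set (V × V)) (ℓ : V × V → ℕ) (u w : V) : ℕ :=
  sInf {n | ∃ p, hasPath A u w p ∧ (pathLen ℓ u p : ℕ∞) = walkDist A ℓ u w ∧ p.length = n}

lemma walkHops_le (hp : hasPath A u w p) (hlen : (pathLen ℓ u p : ℕ∞) = walkDist A ℓ u w) :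
    walkHops A ℓ u w ≤ p.length :=
  Nat.sInf_le ⟨p, hp, hlen, rfl⟩

lemma exists_shortest_walk (h : walkDist A ℓ u w ≠ ⊤) :
    ∃ p, hasPath A u w p ∧ (pathLen ℓ u p : ℕ∞) = walkDist A ℓ u w ∧
      p.length = walkHops A ℓ u w := by
  obtain ⟨p, hp, hlen⟩ := exists_pathLen_eq_walkDist h
  exact Nat.sInf_mem (s := {n | ∃ p, hasPath A u w p ∧ (pathLen ℓ u p : ℕ∞) = walkDist A ℓ u w ∧
    p.length = n}) ⟨_, p, hp, hlen, rfl⟩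

lemma exists_parent (h : walkDist A ℓ u w ≠ ⊤) (hwu : w ≠ u) :
    ∃ a, (a, w) ∈ A ∧ walkDist A ℓ u w = walkDist A ℓ u a + ℓ (a, w) ∧
      walkHops A ℓ u a < walkHops A ℓ u w := by
  obtain ⟨p, hp, hlen, hhops⟩ := exists_shortest_walk h
  have hp0 : p ≠ [] := by
    rintro rfl
    exact hwu (hasPath_nil_iff.mp hp).symm
  obtain ⟨a, q, rfl, hq, ha⟩ := hp.exists_eq_concat hp0
  have hpq : pathLen ℓ u (q ++ [w]) = pathLen ℓ u q + ℓ (a, w) := by simp [pathLen_append hq]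
  have hdist : walkDist A ℓ u w = walkDist A ℓ u a + ℓ (a, w) := by
    refine le_antisymm (walkDist_le_add ha) ?_
    rw [← hlen, hpq, Nat.cast_add]
    gcongr
    exact walkDist_le hq
  have hqa : (pathLen ℓ u q : ℕ∞) = walkDist A ℓ u a := by
    rw [← hlen, hpq, Nat.cast_add] at hdist
    exact WithTop.add_right_cancel (ENat.natCast_ne_top _) hdist
  refine ⟨a, ha, hdist, ?_⟩
  calc walkHops A ℓ u a ≤ q.length := walkHops_le hq hqa
    _ < walkHops A ℓ u w := by simp [← hhops]

open Classical in
/-- The parent of `w` in a shortest-path tree rooted at `u`; `u` and the nodes not reachable from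
`u` are their own parents. -/
noncomputable def walkParent (A : Set (V × V)) (ℓ : V × V → ℕ) (u w : V) : V :=
  if h : walkDist A ℓ u w ≠ ⊤ ∧ w ≠ u then (exists_parent h.1 h.2).choose else w

lemma walkParent_spec (h : walkParent A ℓ u w ≠ w) :
    (walkParent A ℓ u w, w) ∈ A ∧
      walkDist A ℓ u w = walkDist A ℓ u (walkParent A ℓ u w) + ℓ (walkParent A ℓ u w, w) ∧
      walkHops A ℓ u (walkParent A ℓ u w) < walkHops A ℓ u w := by
  unfold walkParent at h ⊢
  split_ifs at h ⊢ with hw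
  · exact (exists_parent hw.1 hw.2).choose_spec
  · exact absurd rfl h

lemma walkParent_ne_self (h : walkDist A ℓ u w ≠ ⊤) (hwu : w ≠ u) : walkParent A ℓ u w ≠ w := by
  intro hself
  have hlt := (exists_parent h hwu).choose_spec.2.2
  rw [walkParent, dif_pos ⟨h, hwu⟩] at hself
  rw [hself] at hlt
  exact lt_irrefl _ hlt

lemma walkDist_le_of_walkParent_eq {S : Set V} (hA : ∀ e ∈ A, e.1 ∈ S)
    (hAB : ∀ x ∈ S, walkParent A ℓ u x = walkParent B ℓ u x) (hw : w ∈ S) :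
    walkDist B ℓ u w ≤ walkDist A ℓ u w := by
  induction hn : walkHops A ℓ u w using Nat.strong_induction_on generalizing w with
  | _ n ih =>
  by_cases hfin : walkDist A ℓ u w = ⊤
  · simp [hfin]
  by_cases hwu : w = u
  · simp [hwu, walkDist_self]
  obtain ⟨hedge, hdist, hhops⟩ := walkParent_spec (walkParent_ne_self hfin hwu)
  have hB := walkParent_spec (A := B) (hAB w hw ▸ walkParent_ne_self hfin hwu)
  rw [← hAB w hw] at hB
  calc walkDist B ℓ u w
      ≤ walkDist B ℓ u (walkParent A ℓ u w) + ℓ (walkParent A ℓ u w, w) := walkDist_le_add hB.1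
    _ ≤ walkDist A ℓ u (walkParent A ℓ u w) + ℓ (walkParent A ℓ u w, w) := by
        gcongr
        exact ih _ (hn ▸ hhops) (hA _ hedge) rfl
    _ = walkDist A ℓ u w := hdist.symm

end Distances

section StretchingCuts

variable {V : Type*} {E C : Set (V × V)} {ℓ : V × V → ℕ} {L : ℕ} {u v : V}

def cutResidual (E : Set (V × V)) (ℓ : V × V → ℕ) (L : ℕ) (u v : V) (C : Set (V × V)) :
    Set (V × V) :=
  (E \ C) ∩ Vuv E ℓ L u v ×ˢ Vuv E ℓ L u v

lemma IsStretchingCut.exists_short_walk_through (hC : IsStretchingCut E ℓ L u v C)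
    {e : V × V} (he : e ∈ C) :
    e ∈ Vuv E ℓ L u v ×ˢ Vuv E ℓ L u v ∧ ∃ q r, hasPath (cutResidual E ℓ L u v C) u e.1 q ∧
      hasPath (cutResidual E ℓ L u v C) e.2 v r ∧ pathLen ℓ u q + ℓ e + pathLen ℓ e.2 r ≤ L := by
  set S := Vuv E ℓ L u v
  obtain ⟨P, hP, hPL⟩ := hC.2.2 (C \ {e}) (sdiff_singleton_ssubset.mpr he)
  have hPS : ∀ x ∈ u :: P, x ∈ S := fun x hx => ⟨P, hP.mono sdiff_subset, hPL, hx⟩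
  have hsub : ((E \ (C \ {e})) ∩ S ×ˢ S) \ {e} ⊆ cutResidual E ℓ L u v C := by
    rintro x ⟨⟨⟨hxE, hxC⟩, hxS⟩, hxe⟩
    exact ⟨⟨hxE, fun h => hxC ⟨h, hxe⟩⟩, hxS⟩
  have hPC : ¬ hasPath (((E \ (C \ {e})) ∩ S ×ˢ S) \ {e}) u v P :=
    fun h => hC.2.1 ⟨P, h.mono (hsub.trans inter_subset_left), hPL⟩
  obtain ⟨⟨-, heS⟩, q, r, hq, hr, hlen⟩ := (hP.inter_prod hPS).exists_split_of_not_hasPath_diff hPC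
  exact ⟨heS, q, r, hq.mono hsub, hr.mono hsub, hlen.trans hPL⟩

lemma IsStretchingCut.mem_iff (hC : IsStretchingCut E ℓ L u v C) {e : V × V} :
    e ∈ C ↔ e ∈ E ∩ Vuv E ℓ L u v ×ˢ Vuv E ℓ L u v ∧
      walkDist (cutResidual E ℓ L u v C) ℓ u e.1 + ℓ e <
        walkDist (cutResidual E ℓ L u v C) ℓ u e.2 := by
  constructor
  · intro he
    obtain ⟨heS, q, r, hq, hr, hlen⟩ := hC.exists_short_walk_through he
    refine ⟨⟨hC.1 he, heS⟩, not_le.mp fun hle => hC.2.1 ?_⟩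
    have hfin : walkDist (cutResidual E ℓ L u v C) ℓ u e.2 ≤ (pathLen ℓ u q + ℓ e : ℕ) :=
      hle.trans (by push_cast; gcongr; exact walkDist_le hq)
    obtain ⟨p, hp, hplen⟩ := exists_pathLen_eq_walkDist (ne_top_of_le_ne_top (by simp) hfin)
    have hpq : pathLen ℓ u p ≤ pathLen ℓ u q + ℓ e := by exact_mod_cast hplen ▸ hfin
    refine ⟨p ++ r, (hp.append hr).mono inter_subset_left, ?_⟩
    rw [pathLen_append hp]
    omega
  · rintro ⟨⟨heE, heS⟩, hlt⟩
    by_contra heC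
    exact (walkDist_le_add (A := cutResidual E ℓ L u v C) (ℓ := ℓ) (u := u) ⟨⟨heE, heC⟩, heS⟩).not_gt hlt

lemma IsStretchingCut.eq_of_walkParent_eq {C' : Set (V × V)} (hC : IsStretchingCut E ℓ L u v C)
    (hC' : IsStretchingCut E ℓ L u v C')
    (h : ∀ w ∈ Vuv E ℓ L u v, walkParent (cutResidual E ℓ L u v C) ℓ u w =
      walkParent (cutResidual E ℓ L u v C') ℓ u w) :
    C = C' := by
  have hdist : ∀ w ∈ Vuv E ℓ L u v, walkDist (cutResidual E ℓ L u v C) ℓ u w =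
      walkDist (cutResidual E ℓ L u v C') ℓ u w := fun w hw =>
    le_antisymm (walkDist_le_of_walkParent_eq (fun e he => he.2.1) (fun x hx => (h x hx).symm) hw)
      (walkDist_le_of_walkParent_eq (fun e he => he.2.1) h hw)
  ext e
  rw [hC.mem_iff, hC'.mem_iff]
  exact and_congr_right fun he => by rw [hdist _ he.2.1, hdist _ he.2.2]

lemma walkParent_cutResidual_mem {w : V} (hw : w ∈ Vuv E ℓ L u v) :
    walkParent (cutResidual E ℓ L u v C) ℓ u w ∈ Vuv E ℓ L u v := by
  by_cases h : walkParent (cutResidual E ℓ L u v C) ℓ u w = w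
  · rwa [h]
  · exact (walkParent_spec h).1.2.1

lemma ncard_stretchingCuts_le [Finite V] :
    {C | IsStretchingCut E ℓ L u v C}.ncard ≤ (Vuv E ℓ L u v).ncard ^ (Vuv E ℓ L u v).ncard := by
  set S := Vuv E ℓ L u v
  let tree : {C // IsStretchingCut E ℓ L u v C} → (S → S) :=
    fun C w => ⟨walkParent (cutResidual E ℓ L u v C) ℓ u w, walkParent_cutResidual_mem w.2⟩
  have htree : Function.Injective tree := fun C C' h =>
    Subtype.ext (C.2.eq_of_walkParent_eq C'.2 fun w hw => congrArg Subtype.val (congrFun h ⟨w, hw⟩))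
  calc {C | IsStretchingCut E ℓ L u v C}.ncard = Nat.card {C // IsStretchingCut E ℓ L u v C} :=
        (Nat.card_coe_set_eq _).symm
    _ ≤ Nat.card (S → S) := Nat.card_le_card_of_injective tree htree
    _ = S.ncard ^ S.ncard := by rw [Nat.card_fun, Nat.card_coe_set_eq]

end StretchingCuts

lemma natCast_pow_self_le_sqrt_rpow_sqrt {k n : ℕ} (hk : (k : ℝ) ≤ √n) :
    ((k ^ k : ℕ) : ℝ) ≤ √n ^ √n := by
  rcases Nat.eq_zero_or_pos n with rfl | hn
  · obtain rfl : k = 0 := by simpa using hk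
    simp
  have h1 : 1 ≤ √(n : ℝ) := Real.one_le_sqrt.mpr (by exact_mod_cast hn)
  calc ((k ^ k : ℕ) : ℝ) = (k : ℝ) ^ (k : ℝ) := by rw [Real.rpow_natCast]; push_cast; rfl
    _ ≤ √n ^ (k : ℝ) := Real.rpow_le_rpow (by positivity) hk (by positivity)
    _ ≤ √n ^ √n := Real.rpow_le_rpow_of_exponent_le h1 hk

theorem card_stretching_cuts_of_thin_general {V : Type*} [Fintype V]
    (E : Set (V × V)) (ℓ : V × V → ℕ) (L : ℕ) (u v : V) (n : ℕ)
    (hthin : ((Vuv E ℓ L u v).ncard : ℝ) ≤ Real.sqrt n) :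
    (({C : Set (V × V) | IsStretchingCut E ℓ L u v C}).ncard : ℝ) ≤
      Real.sqrt n ^ Real.sqrt n :=
  (Nat.cast_le.mpr ncard_stretchingCuts_le).trans (natCast_pow_self_le_sqrt_rpow_sqrt hthin)

/-- For a thin pair `(u,v)` (i.e. `|V_{uv}| ≤ √n` where `n = |V|`), the number
of `u`-`v`-stretching cuts is at most `√n ^ √n`. -/
theorem card_stretching_cuts_of_thin {V : Type*} [Fintype V]
    (E : Set (V × V)) (ℓ : V × V → ℕ) (L : ℕ) (u v : V) (n : ℕ)
    (hn : Fintype.card V = n)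
    (hthin : ((Vuv E ℓ L u v).ncard : ℝ) ≤ Real.sqrt n) :
    (({C : Set (V × V) | IsStretchingCut E ℓ L u v C}).ncard : ℝ) ≤
      Real.sqrt n ^ Real.sqrt n :=
  card_stretching_cuts_of_thin_general E ℓ L u v n hthin
end

section
/- Let f: ℝ>0 → ℝ>0 be such that x ↦ f(x)/x is decreasing. Suppose an iterative algorithm for covering k terminals works as follows: at each step, given k'' remaining terminals to cover, it finds a subtree covering some j ≥ 1 new terminals at cost at most j·f(k'')·(OPT/k''), where OPT is the cost of an optimal solution covering k'' of the remaining terminals (and OPT never exceeds the optimum for the original instance). Then the total cost of the union of all subtrees is at most g(k)·OPT where g(k) = ∫₀^k (f(x)/x) dx. -/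
open MeasureTheory

/-! Let `r t = k - (a 0 + ⋯ + a (t-1))` be the number of terminals still uncovered before stage
`t`. Since `x ↦ f x / x` is decreasing, the cost bound `a t · (f (r t) / r t) · OPT` of stage `t`
is at most `OPT` times the integral of `f x / x` over `[r (t+1), r t]`, an interval of length
`a t` whose right end point is `r t`. These intervals tile `[0, k]`, so the bounds add up to
`OPT · ∫₀ᵏ f x / x`. -/

open Finset Set

theorem AntitoneOn.sub_mul_le_intervalIntegral {h : ℝ → ℝ} {b c : ℝ} (hbc : b ≤ c)
    (hmono : AntitoneOn h (Ioc b c)) (hint : IntervalIntegrable h volume b c) :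
    (c - b) * h c ≤ ∫ x in b..c, h x :=
  calc (c - b) * h c = ∫ _ in b..c, h c := by rw [intervalIntegral.integral_const, smul_eq_mul]
    _ ≤ ∫ x in b..c, h x :=
      intervalIntegral.integral_mono_on_of_le_Ioo hbc intervalIntegrable_const hint
        fun x hx => hmono (Ioo_subset_Ioc_self hx) (right_mem_Ioc.2 (hx.1.trans hx.2)) hx.2.le

theorem intervalIntegral.sum_integral_adjacent_intervals_rev {h : ℝ → ℝ} {r : ℕ → ℝ} {N : ℕ}
    (hint : ∀ t < N, IntervalIntegrable h volume (r (t + 1)) (r t)) :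
    ∑ t ∈ range N, ∫ x in r (t + 1)..r t, h x = ∫ x in r N..r 0, h x := by
  simp_rw [intervalIntegral.integral_symm (r _) (r (_ + 1)), sum_neg_distrib,
    intervalIntegral.sum_integral_adjacent_intervals fun t ht => (hint t ht).symm,
    ← intervalIntegral.integral_symm]

theorem mul_div_mul_le_intervalIntegral_mul {g : ℝ → ℝ}
    (hmono : AntitoneOn (fun x => g x / x) (Ioi 0)) {b c OPT : ℝ} (hb : 0 ≤ b) (hbc : b ≤ c)
    (hint : IntervalIntegrable (fun x => g x / x) volume b c) (hOPT : 0 ≤ OPT) :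
    (c - b) * g c * OPT / c ≤ (∫ x in b..c, g x / x) * OPT := by
  have hmono_bc : AntitoneOn (fun x => g x / x) (Ioc b c) :=
    hmono.mono fun x hx => hb.trans_lt hx.1
  calc (c - b) * g c * OPT / c = (c - b) * (g c / c) * OPT := by ring
    _ ≤ (∫ x in b..c, g x / x) * OPT := by
      gcongr
      exact hmono_bc.sub_mul_le_intervalIntegral hbc hint

/-- The number of terminals still to be covered before stage `t`. -/
noncomputable def remaining (k : ℕ) (a : ℕ → ℕ) (t : ℕ) : ℝ :=
  k - ∑ s ∈ range t, (a s : ℝ)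

section remaining

variable {k : ℕ} {a : ℕ → ℕ}

theorem remaining_zero : remaining k a 0 = k := by simp [remaining]

theorem remaining_succ (t : ℕ) : remaining k a (t + 1) = remaining k a t - a t := by
  simp only [remaining, sum_range_succ]; ring

theorem remaining_antitone : Antitone (remaining k a) :=
  antitone_nat_of_succ_le fun t => by rw [remaining_succ]; linarith [(a t).cast_nonneg (α := ℝ)]

theorem remaining_le (t : ℕ) : remaining k a t ≤ k :=
  remaining_zero (a := a) ▸ remaining_antitone (Nat.zero_le t)

variable {N : ℕ} (htot : ∑ t ∈ range N, a t = k)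
include htot

theorem remaining_eq_zero : remaining k a N = 0 := by simp [remaining, ← htot]

theorem remaining_nonneg {t : ℕ} (ht : t ≤ N) : 0 ≤ remaining k a t :=
  remaining_eq_zero htot ▸ remaining_antitone ht

end remaining

theorem iterative_partial_approximation_general
    (f : ℝ → ℝ)
    (hmono : AntitoneOn (fun x => f x / x) (Set.Ioi (0 : ℝ)))
    (k : ℕ)
    (hint : IntervalIntegrable (fun x => f x / x) volume 0 (k : ℝ))
    (N : ℕ) (a : ℕ → ℕ) (cst : ℕ → ℝ) (OPT : ℝ) (hOPT : 0 ≤ OPT)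
    (htot : ∑ t ∈ Finset.range N, a t = k)
    (hstage : ∀ t < N,
      cst t ≤ (a t : ℝ) *
        f ((k : ℝ) - ∑ s ∈ Finset.range t, (a s : ℝ)) * OPT /
          ((k : ℝ) - ∑ s ∈ Finset.range t, (a s : ℝ))) :
    ∑ t ∈ Finset.range N, cst t ≤ (∫ x in (0 : ℝ)..(k : ℝ), f x / x) * OPT := by
  have hint_stage (t : ℕ) (ht : t < N) : IntervalIntegrable (fun x => f x / x) volume
      (remaining k a (t + 1)) (remaining k a t) := by
    refine hint.mono_set (uIcc_subset_uIcc ?_ ?_) <;>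
      rw [Set.uIcc_of_le k.cast_nonneg] <;>
      exact ⟨remaining_nonneg htot (by omega), remaining_le _⟩
  have hstage_integral (t : ℕ) (ht : t < N) :
      cst t ≤ (∫ x in remaining k a (t + 1)..remaining k a t, f x / x) * OPT := by
    have hstage_t := hstage t ht
    have hlen : (a t : ℝ) = remaining k a t - remaining k a (t + 1) := by
      rw [remaining_succ, sub_sub_cancel]
    rw [hlen] at hstage_t
    exact hstage_t.trans <| mul_div_mul_le_intervalIntegral_mul hmono (remaining_nonneg htot ht)
      (remaining_antitone t.le_succ) (hint_stage t ht) hOPT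
  calc ∑ t ∈ range N, cst t
      ≤ ∑ t ∈ range N, (∫ x in remaining k a (t + 1)..remaining k a t, f x / x) * OPT :=
        sum_le_sum fun t ht => hstage_integral t (mem_range.1 ht)
    _ = (∫ x in (0 : ℝ)..(k : ℝ), f x / x) * OPT := by
        rw [← sum_mul, intervalIntegral.sum_integral_adjacent_intervals_rev hint_stage,
          remaining_eq_zero htot, remaining_zero]

/-- Charikar et al.: an iterative algorithm covering `k` terminals in `N`
stages, where stage `t` covers `a t ≥ 1` new terminals at cost
`cst t ≤ a t · f(k'') · OPT / k''` (with `k''` the number of terminals still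
to cover before stage `t`), produces a solution of total cost at most
`g(k) · OPT` where `g(k) = ∫₀^k f(x)/x dx`, provided `x ↦ f(x)/x` is
decreasing (and integrable so that `g(k)` is defined). -/
theorem iterative_partial_approximation
    (f : ℝ → ℝ) (hfpos : ∀ x > 0, 0 < f x)
    (hmono : AntitoneOn (fun x => f x / x) (Set.Ioi (0 : ℝ)))
    (k : ℕ) (hk : 0 < k)
    (hint : IntervalIntegrable (fun x => f x / x) volume 0 (k : ℝ))
    (N : ℕ) (a : ℕ → ℕ) (cst : ℕ → ℝ) (OPT : ℝ) (hOPT : 0 ≤ OPT)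
    (ha : ∀ t < N, 1 ≤ a t)
    (htot : ∑ t ∈ Finset.range N, a t = k)
    (hstage : ∀ t < N,
      cst t ≤ (a t : ℝ) *
        f ((k : ℝ) - ∑ s ∈ Finset.range t, (a s : ℝ)) * OPT /
          ((k : ℝ) - ∑ s ∈ Finset.range t, (a s : ℝ))) :
    ∑ t ∈ Finset.range N, cst t ≤ (∫ x in (0 : ℝ)..(k : ℝ), f x / x) * OPT :=
  iterative_partial_approximation_general f hmono k hint N a cst OPT hOPT htot hstage
end

section
/- Let i ≥ 3, and suppose a greedy process covers terminals in stages, where each added subtree has relative cost (cost per newly covered terminal) at most (i−2)·C/k* whenever at least ((i−2)/(i−1))·k* of the k* target terminals remain uncovered and can be covered at total cost at most C. Then at the first moment the process has covered at least k*/(i−1) terminals, the accumulated solution has relative cost at most (i−1)·C/k*. -/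
/-! Since the prefix sums of the `a t` increase, every stage `t ≤ N` starts with fewer than
`k*/(i−1)` terminals covered, so each has relative cost at most
`(i−2)·C / (((i−2)/(i−1))·k*) = (i−1)·C/k*`; a ratio of sums is bounded by any common bound
on the termwise ratios. -/

open Finset

theorem sum_div_sum_le_of_le_mul {ι K : Type*} [Field K] [LinearOrder K] [IsStrictOrderedRing K]
    {s : Finset ι} {f g : ι → K} {c : K}
    (hg : 0 < ∑ j ∈ s, g j) (h : ∀ j ∈ s, f j ≤ g j * c) :
    (∑ j ∈ s, f j) / ∑ j ∈ s, g j ≤ c := by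
  rw [div_le_iff₀ hg, mul_comm, sum_mul]
  exact sum_le_sum h

theorem mul_div_div_mul_eq {K : Type*} [Field K] {x : K} (hx : x ≠ 0) (y C k : K) :
    x * C / (x / y * k) = y * C / k := by
  rw [div_mul_eq_mul_div, div_div_eq_mul_div, mul_assoc, mul_div_mul_left _ _ hx, mul_comm]

theorem greedy_relative_cost_general (i : ℕ) (hi : 3 ≤ i)
    (C kstar : ℝ)
    (N : ℕ) (a : ℕ → ℕ) (cst : ℕ → ℝ)
    (ha : ∀ t ≤ N, 1 ≤ a t)
    (hstage : ∀ t ≤ N,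
      (∑ s ∈ Finset.range t, (a s : ℝ)) < kstar / ((i : ℝ) - 1) →
      cst t ≤ (a t : ℝ) *
        (((i : ℝ) - 2) * C / ((((i : ℝ) - 2) / ((i : ℝ) - 1)) * kstar)))
    (hbefore : (∑ s ∈ Finset.range N, (a s : ℝ)) < kstar / ((i : ℝ) - 1)) :
    (∑ t ∈ Finset.range (N + 1), cst t) /
        (∑ t ∈ Finset.range (N + 1), (a t : ℝ)) ≤
      ((i : ℝ) - 1) * C / kstar := by
  have hi2 : (i : ℝ) - 2 ≠ 0 := by
    have : (3 : ℝ) ≤ i := by exact_mod_cast hi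
    linarith
  have hcovered : 0 < ∑ t ∈ range (N + 1), (a t : ℝ) :=
    sum_pos (fun t ht => by exact_mod_cast ha t (Nat.lt_succ_iff.mp (mem_range.mp ht)))
      nonempty_range_add_one
  refine sum_div_sum_le_of_le_mul hcovered fun t ht => ?_
  have htN : t ≤ N := Nat.lt_succ_iff.mp (mem_range.mp ht)
  have hprefix : ∑ s ∈ range t, (a s : ℝ) ≤ ∑ s ∈ range N, (a s : ℝ) :=
    sum_le_sum_of_subset_of_nonneg (range_subset_range.2 htN) fun _ _ _ => Nat.cast_nonneg _
  rw [← mul_div_div_mul_eq hi2]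
  exact hstage t htN (hprefix.trans_lt hbefore)

/-- Greedy averaging: stages `t = 0, …, N` cover `a t ≥ 1` terminals at cost
`cst t`; as long as fewer than `k*/(i−1)` terminals are covered (so at least
`((i−2)/(i−1))·k*` of the `k*` target terminals remain uncovered and coverable
at total cost `C`), each stage has relative cost at most
`(i−2)·C / (((i−2)/(i−1))·k*)`. At the first moment (stage `N`) at which at
least `k*/(i−1)` terminals are covered, the accumulated solution has relative
cost at most `(i−1)·C/k*`. -/
theorem greedy_relative_cost (i : ℕ) (hi : 3 ≤ i)
    (C kstar : ℝ) (hC : 0 < C) (hkstar : 0 < kstar)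
    (N : ℕ) (a : ℕ → ℕ) (cst : ℕ → ℝ)
    (ha : ∀ t ≤ N, 1 ≤ a t) (hcst : ∀ t ≤ N, 0 ≤ cst t)
    (hstage : ∀ t ≤ N,
      (∑ s ∈ Finset.range t, (a s : ℝ)) < kstar / ((i : ℝ) - 1) →
      cst t ≤ (a t : ℝ) *
        (((i : ℝ) - 2) * C / ((((i : ℝ) - 2) / ((i : ℝ) - 1)) * kstar)))
    (hbefore : (∑ s ∈ Finset.range N, (a s : ℝ)) < kstar / ((i : ℝ) - 1))
    (hafter : kstar / ((i : ℝ) - 1) ≤ ∑ s ∈ Finset.range (N + 1), (a s : ℝ)) :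
    (∑ t ∈ Finset.range (N + 1), cst t) /
        (∑ t ∈ Finset.range (N + 1), (a t : ℝ)) ≤
      ((i : ℝ) - 1) * C / kstar :=
  greedy_relative_cost_general i hi C kstar N a cst ha hstage hbefore
end
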